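/- arXiv:2405.00675 — 4 statements merged into one kernel-verified Lean document; each statement's English description precedes it below -/
import Mathlib

section
/- Suppose a sequence of distributions π_1, π_2, ..., π_T on a finite set Y satisfies the Hedge guarantee: (T/2) ≤ min_π [ (ηT/(1-e^{-η})) · P(π ≺ π̄_T) + KL(π ‖ π_0)/(1-e^{-η}) ], where π̄_T = (1/T)∑_t π_t and KL(π ‖ π_0) ≤ C for all π in the feasible set. Then with η = C/√T, the duality gap satisfies max_π P(π ≻ π̄_T) - min_π P(π ≺ π̄_T) = O(1/√T). -/
/-- Probability distributions on a finite type `Y`. -/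
def ProbDist (Y : Type*) [Fintype Y] : Type _ :=
  {π : Y → ℝ // (∀ y, 0 ≤ π y) ∧ ∑ y, π y = 1}

/-- Win probability of mixed policy `μ` against `ν`. -/
noncomputable def winProb {Y : Type*} [Fintype Y] (P : Y → Y → ℝ)
    (μ ν : Y → ℝ) : ℝ :=
  ∑ y : Y, ∑ y' : Y, μ y * ν y' * P y y'

/-- KL divergence between two distributions on a finite type. -/
noncomputable def klDiv {Y : Type*} [Fintype Y] (π π₀ : Y → ℝ) : ℝ :=
  ∑ y : Y, π y * Real.log (π y / π₀ y)

/-- The average (mixture) policy `π̄_T = (1/T) ∑_{t<T} π_t`. -/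
noncomputable def mixPolicy {Y : Type*} [Fintype Y] (T : ℕ) (πs : ℕ → Y → ℝ) : Y → ℝ :=
  fun y => (1 / (T : ℝ)) * ∑ t ∈ Finset.range T, πs t y

/-! Since `1 - e^{-η} ≥ η - η²`, the Hedge guarantee yields, for every `π`,
`P(π ≻ π̄_T) ≤ 1/2 + η/2 + C/(ηT)`, which at `η = C/√T` is `1/2 + (C/2 + 1)/√T`.
The duality gap is `2 max_π (P(π ≻ π̄_T) - 1/2)`. -/

theorem Real.exp_neg_le_one_sub_add_sq {x : ℝ} (hx : 0 ≤ x) : Real.exp (-x) ≤ 1 - x + x ^ 2 := by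
  rw [Real.exp_neg, inv_le_iff_one_le_mul₀ (Real.exp_pos x)]
  have hq : 0 ≤ 1 - x + x ^ 2 := by nlinarith
  -- `(1 + x) (1 - x + x²) = 1 + x³`
  nlinarith [mul_le_mul_of_nonneg_right (Real.add_one_le_exp x) hq, pow_nonneg hx 3]

theorem win_le_of_hedge_bound {T η K C w : ℝ} (hT : 0 < T) (hη : 0 < η) (hK : K ≤ C)
    (hedge : T / 2 ≤ η * T / (1 - Real.exp (-η)) * (1 - w) + K / (1 - Real.exp (-η))) :
    w ≤ 1 / 2 + η / 2 + C / (η * T) := by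
  have hD : η - η ^ 2 ≤ 1 - Real.exp (-η) := by
    linarith [Real.exp_neg_le_one_sub_add_sq hη.le]
  have hD_pos : 0 < 1 - Real.exp (-η) := by
    linarith [Real.exp_lt_one_iff.2 (neg_lt_zero.2 hη)]
  have hcleared : T / 2 * (1 - Real.exp (-η)) ≤ η * T * (1 - w) + K := by
    rwa [div_mul_eq_mul_div, ← add_div, le_div_iff₀ hD_pos] at hedge
  have hlin : T / 2 * (η - η ^ 2) ≤ η * T * (1 - w) + C := by
    nlinarith [mul_le_mul_of_nonneg_left hD (by positivity : (0 : ℝ) ≤ T / 2)]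
  rw [← sub_le_iff_le_add', le_div_iff₀ (by positivity)]
  linarith

theorem ciSup_sub_ciInf_one_sub_le {ι : Type*} [Nonempty ι] {f : ι → ℝ} {ε : ℝ}
    (hf : ∀ i, f i ≤ 1 / 2 + ε) : (⨆ i, f i) - ⨅ i, (1 - f i) ≤ 2 * ε := by
  rw [sub_le_iff_le_add]
  refine ciSup_le fun i => ?_
  rw [← sub_le_iff_le_add']
  refine le_ciInf fun j => ?_
  linarith [hf i, hf j]

/-- If the Hedge guarantee holds with `η = C/√T`, then the duality gap
of the mixture policy is `O(1/√T)`, with a constant depending only on `C`. -/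
theorem hedge_implies_duality_gap (C : ℝ) (hC : 0 < C) :
    ∃ c : ℝ, 0 < c ∧
      ∀ (Y : Type) [Fintype Y] [Nonempty Y]
        (P : Y → Y → ℝ),
        (∀ y y' : Y, 0 ≤ P y y') → (∀ y y' : Y, P y y' ≤ 1) →
        (∀ y y' : Y, P y y' + P y' y = 1) →
        ∀ (π₀ : ProbDist Y), (∀ y, 0 < π₀.1 y) →
        (∀ π : ProbDist Y, klDiv π.1 π₀.1 ≤ C) →
        ∀ (T : ℕ), 1 ≤ T →
        ∀ (πs : ℕ → ProbDist Y),
        (∀ π : ProbDist Y,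
            (T : ℝ) / 2 ≤
              ((C / Real.sqrt T) * T / (1 - Real.exp (-(C / Real.sqrt T)))) *
                  (1 - winProb P π.1 (mixPolicy T (fun t => (πs t).1)))
                + klDiv π.1 π₀.1 / (1 - Real.exp (-(C / Real.sqrt T)))) →
        (⨆ π : ProbDist Y, winProb P π.1 (mixPolicy T (fun t => (πs t).1)))
          - (⨅ π : ProbDist Y, (1 - winProb P π.1 (mixPolicy T (fun t => (πs t).1))))
          ≤ c / Real.sqrt T := by
  refine ⟨C + 2, by linarith, ?_⟩
  intro Y _ _ P _ _ _ π₀ _ hKL T hT πs hedge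
  have : Nonempty (ProbDist Y) := ⟨π₀⟩
  have hT_pos : (0 : ℝ) < T := by exact_mod_cast hT
  have hsqrt : 0 < Real.sqrt T := Real.sqrt_pos.2 hT_pos
  have hη : 0 < C / Real.sqrt T := div_pos hC hsqrt
  have hrate : C / Real.sqrt T / 2 + C / (C / Real.sqrt T * T) = (C / 2 + 1) / Real.sqrt T := by
    have hT_sq : (T : ℝ) = Real.sqrt T * Real.sqrt T := (Real.mul_self_sqrt hT_pos.le).symm
    field_simp
    linear_combination -2 * hT_sq
  calc _ ≤ 2 * ((C / 2 + 1) / Real.sqrt T) := ciSup_sub_ciInf_one_sub_le fun π => by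
        have := win_le_of_hedge_bound hT_pos hη (hKL π) (hedge π)
        linarith
    _ = (C + 2) / Real.sqrt T := by ring
end

section
/- For fixed i ≠ j, with antisymmetric Rademacher variables p_{k,l} as above and X_i = (1/K)∑_k p_{i,k}, the covariance Cov(e^{ηX_i}, e^{ηX_j}) = ((e^{η/K} + e^{-η/K})/2)^{2K-4} - ((e^{η/K} + e^{-η/K})/2)^{2K-2}, which converges to 0 as K → ∞. -/
/-- Sample space: one independent uniform sign for each pair `i < j` in `Fin K`. -/
def SignSpace (K : ℕ) : Type :=
  {ij : Fin K × Fin K // ij.1 < ij.2} → Bool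

instance (K : ℕ) : Fintype (SignSpace K) := by
  unfold SignSpace; infer_instance

/-- The value `±1` of a Boolean sign. -/
def signVal (b : Bool) : ℝ := if b then 1 else -1

/-- The antisymmetric Rademacher matrix: `p i j = ±1` i.i.d. for `i < j`,
`p j i = - p i j`, and `p i i = 0`. -/
def pMat {K : ℕ} (ω : SignSpace K) (i j : Fin K) : ℝ :=
  if h : i < j then signVal (ω ⟨(i, j), h⟩)
  else if h' : j < i then - signVal (ω ⟨(j, i), h'⟩)
  else 0

/-- `X_i = (1/K) ∑_j p_{i,j}`. -/
noncomputable def Xvar {K : ℕ} (ω : SignSpace K) (i : Fin K) : ℝ :=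
  (1 / (K : ℝ)) * ∑ j : Fin K, pMat ω i j

/-- Expectation under the uniform measure on `SignSpace K`. -/
noncomputable def expec {K : ℕ} (f : SignSpace K → ℝ) : ℝ :=
  (∑ ω : SignSpace K, f ω) / (Fintype.card (SignSpace K) : ℝ)

open Finset

abbrev Edge (K : ℕ) := {ij : Fin K × Fin K // ij.1 < ij.2}

/-- Lemma A: expectation of exp of a linear form factorizes. -/
lemma expec_exp_sum {K : ℕ} (a : Edge K → ℝ) :
    expec (fun ω : SignSpace K => Real.exp (∑ e, a e * signVal (ω e)))
      = ∏ e, ((Real.exp (a e) + Real.exp (-(a e))) / 2) := by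
  unfold expec
  have hcard : (Fintype.card (SignSpace K) : ℝ) = 2 ^ (Fintype.card (Edge K)) := by
    have h : Fintype.card (SignSpace K) = Fintype.card (Edge K → Bool) :=
      Fintype.card_congr (Equiv.refl _)
    rw [h, Fintype.card_fun, Fintype.card_bool]
    push_cast
    ring
  have h1 : (∑ ω : SignSpace K, Real.exp (∑ e, a e * signVal (ω e)))
      = ∑ x : Edge K → Bool, ∏ e, Real.exp (a e * signVal (x e)) := by
    refine Fintype.sum_equiv (Equiv.refl _) _ _ (fun ω => ?_)
    rw [Real.exp_sum]; rfl
  rw [h1, ← Fintype.prod_sum (fun e (b : Bool) => Real.exp (a e * signVal b)), hcard]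
  rw [show ((2:ℝ) ^ (Fintype.card (Edge K))) = ∏ _e : Edge K, (2:ℝ) by
    rw [Finset.prod_const, Finset.card_univ]]
  rw [← Finset.prod_div_distrib]
  refine Finset.prod_congr rfl (fun e _ => ?_)
  rw [Fintype.sum_bool]
  simp [signVal, mul_neg_one]

/-- coefficient of edge `e` in `∑_j p_{i,j}`, as a function of the underlying pair. -/
def cfp {K : ℕ} (i : Fin K) (p : Fin K × Fin K) : ℝ :=
  (if p.1 = i then 1 else 0) - (if p.2 = i then 1 else 0)

lemma pMat_self {K : ℕ} (ω : SignSpace K) (i : Fin K) : pMat ω i i = 0 := by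
  simp [pMat]

lemma pMat_anti {K : ℕ} (ω : SignSpace K) {a b : Fin K} (h : a < b) :
    pMat ω b a = - pMat ω a b := by
  unfold pMat
  rw [dif_neg (asymm h), dif_pos h, dif_pos h]

lemma pMat_of_lt {K : ℕ} (ω : SignSpace K) {a b : Fin K} (h : a < b) :
    pMat ω a b = signVal (ω ⟨(a, b), h⟩) := by
  unfold pMat; rw [dif_pos h]

/-- Key: `i`-th row sum as a linear form in the independent signs. -/
lemma row_sum_eq {K : ℕ} (ω : SignSpace K) (i : Fin K) :
    ∑ j : Fin K, pMat ω i j = ∑ e : Edge K, cfp i e.1 * signVal (ω e) := by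
  classical
  set A := ∑ l : Fin K, (if i < l then pMat ω i l else 0) with hA
  set B := ∑ k : Fin K, (if k < i then pMat ω i k else 0) with hB
  have hmem : i ∈ (univ : Finset (Fin K)) := Finset.mem_univ i
  -- convert the edge sum to a sum over pairs
  have hsub : (∑ p ∈ univ.filter (fun p : Fin K × Fin K => p.1 < p.2),
        cfp i p * pMat ω p.1 p.2) = ∑ e : Edge K, cfp i e.1 * signVal (ω e) := by
    rw [Finset.sum_subtype (p := fun p : Fin K × Fin K => p.1 < p.2)
        (univ.filter (fun p : Fin K × Fin K => p.1 < p.2))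
        (by simp) (fun p => cfp i p * pMat ω p.1 p.2)]
    refine Fintype.sum_congr _ _ (fun e => ?_)
    rw [pMat_of_lt ω e.2]
  -- evaluate row by row
  have hrow : ∀ k : Fin K,
      (∑ l : Fin K, if k < l then cfp i (k, l) * pMat ω k l else 0)
      = if k = i then A else (if k < i then pMat ω i k else 0) := by
    intro k
    by_cases hk : k = i
    · subst hk
      rw [if_pos rfl, hA]
      refine Fintype.sum_congr _ _ (fun l => ?_)
      by_cases hl : k < l
      · rw [if_pos hl, if_pos hl, cfp]
        have : l ≠ k := (ne_of_lt hl).symm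
        simp [this]
      · rw [if_neg hl, if_neg hl]
    · rw [if_neg hk]
      rw [Finset.sum_eq_single i]
      · by_cases hki : k < i
        · rw [if_pos hki, if_pos hki, cfp, pMat_anti ω hki]
          simp [hk]
        · rw [if_neg hki, if_neg hki]
      · intro l _ hl
        by_cases hkl : k < l
        · rw [if_pos hkl, cfp]
          simp [hk, hl]
        · rw [if_neg hkl]
      · intro h; exact absurd (Finset.mem_univ i) h
  have hR : (∑ e : Edge K, cfp i e.1 * signVal (ω e)) = B + A := by
    rw [← hsub, Finset.sum_filter, Fintype.sum_prod_type,
      Fintype.sum_congr _ _ hrow, Finset.sum_eq_sum_sdiff_singleton_add hmem, if_pos rfl]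
    congr 1
    have h2 : ∑ k ∈ univ \ {i},
        (if k = i then A else (if k < i then pMat ω i k else 0))
        = ∑ k ∈ univ \ {i}, (if k < i then pMat ω i k else 0) := by
      refine Finset.sum_congr rfl (fun k hkmem => ?_)
      rw [if_neg (by simpa using (Finset.mem_sdiff.mp hkmem).2)]
    rw [h2, hB, Finset.sum_eq_sum_sdiff_singleton_add hmem (fun k => if k < i then pMat ω i k else 0),
      if_neg (lt_irrefl i), add_zero]
  have hL : ∑ j : Fin K, pMat ω i j = B + A := by
    have h4 : ∀ j : Fin K, pMat ω i j
        = (if j < i then pMat ω i j else 0) + (if i < j then pMat ω i j else 0) := by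
      intro j
      rcases lt_trichotomy i j with h | h | h
      · rw [if_pos h, if_neg (asymm h), zero_add]
      · subst h; rw [if_neg (lt_irrefl i), pMat_self]; simp
      · rw [if_neg (asymm h), if_pos h, add_zero]
    rw [Fintype.sum_congr _ _ h4, Finset.sum_add_distrib]
  rw [hL, hR]

/-- evaluate the product over edges when coefficients take values in `{0, 1, -1}`. -/
lemma prod_eval {K : ℕ} (c : Edge K → ℝ) (hc : ∀ e, c e = 0 ∨ c e = 1 ∨ c e = -1) (t : ℝ) :
    (∏ e : Edge K, ((Real.exp (t * c e) + Real.exp (-(t * c e))) / 2))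
      = ((Real.exp t + Real.exp (-t)) / 2) ^ (univ.filter (fun e => c e ≠ 0)).card := by
  classical
  rw [← Finset.prod_const, Finset.prod_filter]
  refine Finset.prod_congr rfl (fun e _ => ?_)
  rcases hc e with h | h | h
  · rw [h, if_neg (by simp)]
    norm_num
  · rw [h, if_pos (by norm_num)]
    norm_num
  · rw [h, if_pos (by norm_num)]
    rw [mul_neg_one, neg_neg, add_comm]

/-- generic counting reduction: from edges to a double sum over indices. -/
lemma card_edge_filter_eq {K : ℕ} (Q : Fin K × Fin K → Prop) [DecidablePred Q] :
    (univ.filter (fun e : Edge K => Q e.1)).card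
      = ∑ k : Fin K, ∑ l : Fin K, (if k < l ∧ Q (k, l) then 1 else 0) := by
  classical
  rw [Finset.card_filter]
  rw [Finset.sum_subtype (p := fun p : Fin K × Fin K => p.1 < p.2)
      (univ.filter (fun p : Fin K × Fin K => p.1 < p.2))
      (by simp) (fun p => if Q p then 1 else 0) |>.symm]
  rw [Finset.sum_filter, Fintype.sum_prod_type]
  refine Fintype.sum_congr _ _ (fun k => Fintype.sum_congr _ _ (fun l => ?_))
  by_cases h1 : k < l
  · by_cases h2 : Q (k, l)
    · rw [if_pos h1, if_pos h2, if_pos ⟨h1, h2⟩]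
    · rw [if_pos h1, if_neg h2, if_neg (by tauto)]
  · rw [if_neg h1, if_neg (by tauto)]

lemma sum_ite_lt {K : ℕ} (i : Fin K) :
    (∑ l : Fin K, if i < l then 1 else 0) = K - 1 - (i : ℕ) := by
  classical
  rw [← Finset.card_filter]
  rw [show ({l ∈ univ | i < l} : Finset (Fin K)) = Finset.Ioi i from Finset.filter_lt_eq_Ioi]
  exact Fin.card_Ioi i

lemma sum_ite_gt {K : ℕ} (i : Fin K) :
    (∑ k : Fin K, if k < i then 1 else 0) = (i : ℕ) := by
  classical
  rw [← Finset.card_filter]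
  rw [show ({k ∈ univ | k < i} : Finset (Fin K)) = Finset.Iio i from Finset.filter_gt_eq_Iio]
  exact Fin.card_Iio i

lemma count_one {K : ℕ} (i : Fin K) :
    (univ.filter (fun e : Edge K => cfp i e.1 ≠ 0)).card = K - 1 := by
  classical
  rw [card_edge_filter_eq (fun p : Fin K × Fin K => cfp i p ≠ 0)]
  have hmem : i ∈ (univ : Finset (Fin K)) := Finset.mem_univ i
  have hrow : ∀ k : Fin K,
      (∑ l : Fin K, if k < l ∧ cfp i (k, l) ≠ 0 then 1 else 0)
      = if k = i then (K - 1 - (i : ℕ)) else (if k < i then 1 else 0) := by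
    intro k
    by_cases hk : k = i
    · subst hk
      rw [if_pos rfl, ← sum_ite_lt k]
      refine Fintype.sum_congr _ _ (fun l => ?_)
      by_cases hl : k < l
      · rw [if_pos ⟨hl, by simp [cfp, (ne_of_lt hl).symm]⟩, if_pos hl]
      · rw [if_neg (by tauto), if_neg hl]
    · rw [if_neg hk, Finset.sum_eq_single i]
      · by_cases hki : k < i
        · rw [if_pos ⟨hki, by simp [cfp, hk]⟩, if_pos hki]
        · rw [if_neg (by tauto), if_neg hki]
      · intro l _ hl
        rw [if_neg]
        rintro ⟨-, hc⟩
        exact hc (by simp [cfp, hk, hl])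
      · intro h; exact absurd hmem h
  rw [Fintype.sum_congr _ _ hrow,
    Finset.sum_eq_sum_sdiff_singleton_add hmem, if_pos rfl]
  have h2 : ∑ k ∈ univ \ {i},
      (if k = i then (K - 1 - (i : ℕ)) else (if k < i then 1 else 0))
      = ∑ k ∈ univ \ {i}, (if k < i then 1 else 0) := by
    refine Finset.sum_congr rfl (fun k hkmem => ?_)
    rw [if_neg (by simpa using (Finset.mem_sdiff.mp hkmem).2)]
  have h3 : ∑ k ∈ univ \ {i}, (if k < i then 1 else 0) = (i : ℕ) := by
    have := Finset.sum_eq_sum_sdiff_singleton_add hmem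
      (fun k : Fin K => if k < i then 1 else 0)
    rw [if_neg (lt_irrefl i), add_zero] at this
    rw [← this, sum_ite_gt]
  rw [h2, h3]
  have := i.isLt
  omega

lemma count_two {K : ℕ} {i j : Fin K} (hij : i ≠ j) :
    (univ.filter (fun e : Edge K => cfp i e.1 + cfp j e.1 ≠ 0)).card = 2 * K - 4 := by
  classical
  rw [card_edge_filter_eq (fun p : Fin K × Fin K => cfp i p + cfp j p ≠ 0)]
  set Row : Fin K → ℕ :=
    fun k => ∑ l : Fin K, if k < l ∧ cfp i (k, l) + cfp j (k, l) ≠ 0 then 1 else 0 with hRow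
  set q : Fin K → ℕ :=
    fun k => (if k < i then 1 else 0) + (if k < j then 1 else 0) with hq
  have hmemi : i ∈ (univ : Finset (Fin K)) := Finset.mem_univ i
  have hmemj : j ∈ (univ : Finset (Fin K)) \ {i} := by simp [hij.symm]
  -- row at i
  have hrowi : Row i + (if i < j then 1 else 0) = K - 1 - (i : ℕ) := by
    have hj : (∑ l : Fin K, if i < l ∧ l = j then 1 else 0) = (if i < j then 1 else 0) := by
      rw [Finset.sum_eq_single j]
      · by_cases h : i < j
        · rw [if_pos ⟨h, rfl⟩, if_pos h]
        · rw [if_neg (by tauto), if_neg h]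
      · intro l _ hl; rw [if_neg (by tauto)]
      · intro h; exact absurd (Finset.mem_univ j) h
    rw [hRow, ← hj, ← Finset.sum_add_distrib, ← sum_ite_lt i]
    refine Fintype.sum_congr _ _ (fun l => ?_)
    by_cases hl : i < l
    · have hli : l ≠ i := (ne_of_lt hl).symm
      by_cases hlj : l = j
      · rw [if_neg, if_pos ⟨hl, hlj⟩, if_pos hl]
        rintro ⟨-, hc⟩
        exact hc (by simp [cfp, hli, hlj, hij, hij.symm])
      · rw [if_pos ⟨hl, by simp [cfp, hli, hlj, hij, hij.symm]⟩, if_neg (by tauto), if_pos hl]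
    · rw [if_neg (by tauto), if_neg (by tauto), if_neg hl]
  -- row at j
  have hrowj : Row j + (if j < i then 1 else 0) = K - 1 - (j : ℕ) := by
    have hi : (∑ l : Fin K, if j < l ∧ l = i then 1 else 0) = (if j < i then 1 else 0) := by
      rw [Finset.sum_eq_single i]
      · by_cases h : j < i
        · rw [if_pos ⟨h, rfl⟩, if_pos h]
        · rw [if_neg (by tauto), if_neg h]
      · intro l _ hl; rw [if_neg (by tauto)]
      · intro h; exact absurd (Finset.mem_univ i) h
    rw [hRow, ← hi, ← Finset.sum_add_distrib, ← sum_ite_lt j]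
    refine Fintype.sum_congr _ _ (fun l => ?_)
    by_cases hl : j < l
    · have hlj : l ≠ j := (ne_of_lt hl).symm
      by_cases hli : l = i
      · rw [if_neg, if_pos ⟨hl, hli⟩, if_pos hl]
        rintro ⟨-, hc⟩
        exact hc (by simp [cfp, hli, hlj, hij, hij.symm])
      · rw [if_pos ⟨hl, by simp [cfp, hli, hlj, hij, hij.symm]⟩, if_neg (by tauto), if_pos hl]
    · rw [if_neg (by tauto), if_neg (by tauto), if_neg hl]
  -- other rows
  have hrowo : ∀ k : Fin K, k ≠ i → k ≠ j → Row k = q k := by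
    intro k hki hkj
    have h1 : (∑ l : Fin K, if k < l ∧ l = i then 1 else 0) = (if k < i then 1 else 0) := by
      rw [Finset.sum_eq_single i]
      · by_cases h : k < i
        · rw [if_pos ⟨h, rfl⟩, if_pos h]
        · rw [if_neg (by tauto), if_neg h]
      · intro l _ hl; rw [if_neg (by tauto)]
      · intro h; exact absurd (Finset.mem_univ i) h
    have h2 : (∑ l : Fin K, if k < l ∧ l = j then 1 else 0) = (if k < j then 1 else 0) := by
      rw [Finset.sum_eq_single j]
      · by_cases h : k < j
        · rw [if_pos ⟨h, rfl⟩, if_pos h]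
        · rw [if_neg (by tauto), if_neg h]
      · intro l _ hl; rw [if_neg (by tauto)]
      · intro h; exact absurd (Finset.mem_univ j) h
    simp only [hRow, hq]
    rw [← h1, ← h2, ← Finset.sum_add_distrib]
    refine Fintype.sum_congr _ _ (fun l => ?_)
    by_cases hl : k < l
    · by_cases hli : l = i
      · have hlj : l ≠ j := by rw [hli]; exact hij
        rw [if_pos ⟨hl, by simp [cfp, hki, hkj, hli, hlj, hij, hij.symm]⟩, if_pos ⟨hl, hli⟩,
          if_neg (by tauto)]
      · by_cases hlj : l = j
        · rw [if_pos ⟨hl, by simp [cfp, hki, hkj, hli, hlj, hij, hij.symm]⟩, if_neg (by tauto),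
            if_pos ⟨hl, hlj⟩]
        · rw [if_neg, if_neg (by tauto), if_neg (by tauto)]
          rintro ⟨-, hc⟩
          exact hc (by simp [cfp, hki, hkj, hli, hlj, hij, hij.symm])
    · rw [if_neg (by tauto), if_neg (by tauto), if_neg (by tauto)]
  -- assemble
  have e1 : ∑ k : Fin K, Row k = ∑ k ∈ univ \ {i}, Row k + Row i :=
    Finset.sum_eq_sum_sdiff_singleton_add hmemi Row
  have e2 : ∑ k ∈ univ \ {i}, Row k = ∑ k ∈ (univ \ {i}) \ {j}, Row k + Row j :=
    Finset.sum_eq_sum_sdiff_singleton_add hmemj Row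
  have e3 : ∑ k ∈ (univ \ {i}) \ {j}, Row k = ∑ k ∈ (univ \ {i}) \ {j}, q k := by
    refine Finset.sum_congr rfl (fun k hk => ?_)
    have hk' := Finset.mem_sdiff.mp hk
    have hkj : k ≠ j := by simpa using hk'.2
    have hki : k ≠ i := by simpa using (Finset.mem_sdiff.mp hk'.1).2
    exact hrowo k hki hkj
  have e4 : ∑ k : Fin K, q k = ∑ k ∈ univ \ {i}, q k + q i :=
    Finset.sum_eq_sum_sdiff_singleton_add hmemi q
  have e5 : ∑ k ∈ univ \ {i}, q k = ∑ k ∈ (univ \ {i}) \ {j}, q k + q j :=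
    Finset.sum_eq_sum_sdiff_singleton_add hmemj q
  have e6 : ∑ k : Fin K, q k = (i : ℕ) + (j : ℕ) := by
    rw [hq, Finset.sum_add_distrib, sum_ite_gt, sum_ite_gt]
  have hqi : q i = (if i < j then 1 else 0) := by
    rw [hq]; simp
  have hqj : q j = (if j < i then 1 else 0) := by
    rw [hq]; simp
  have hiK := i.isLt
  have hjK := j.isLt
  show ∑ k : Fin K, Row k = 2 * K - 4
  rcases lt_or_gt_of_ne hij with h | h
  · rw [if_pos h] at hrowi hqi
    rw [if_neg (asymm h)] at hrowj hqj
    omega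
  · rw [if_neg (asymm h)] at hrowi hqi
    rw [if_pos h] at hrowj hqj
    omega

lemma cf_vals {K : ℕ} (i : Fin K) (e : Edge K) :
    cfp i e.1 = 0 ∨ cfp i e.1 = 1 ∨ cfp i e.1 = -1 := by
  have hab : e.1.1 ≠ e.1.2 := ne_of_lt e.2
  by_cases h1 : e.1.1 = i <;> by_cases h2 : e.1.2 = i <;>
    simp_all [cfp]

lemma cf2_vals {K : ℕ} {i j : Fin K} (hij : i ≠ j) (e : Edge K) :
    cfp i e.1 + cfp j e.1 = 0 ∨ cfp i e.1 + cfp j e.1 = 1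
      ∨ cfp i e.1 + cfp j e.1 = -1 := by
  have hab : e.1.1 ≠ e.1.2 := ne_of_lt e.2
  by_cases h1 : e.1.1 = i <;> by_cases h2 : e.1.2 = i <;>
    by_cases h3 : e.1.1 = j <;> by_cases h4 : e.1.2 = j <;>
    simp_all [cfp]

lemma Xvar_lin {K : ℕ} (η : ℝ) (ω : SignSpace K) (i : Fin K) :
    η * Xvar ω i = ∑ e : Edge K, (η / K * cfp i e.1) * signVal (ω e) := by
  rw [Xvar, row_sum_eq ω i, Finset.mul_sum, Finset.mul_sum]
  refine Fintype.sum_congr _ _ (fun e => ?_)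
  ring

lemma expec_one {K : ℕ} (η : ℝ) (i : Fin K) :
    expec (fun ω : SignSpace K => Real.exp (η * Xvar ω i))
      = ((Real.exp (η / K) + Real.exp (-(η / K))) / 2) ^ (K - 1) := by
  classical
  have h1 : expec (fun ω : SignSpace K => Real.exp (η * Xvar ω i))
      = expec (fun ω : SignSpace K =>
          Real.exp (∑ e : Edge K, (η / K * cfp i e.1) * signVal (ω e))) := by
    congr 1
    funext ω
    rw [Xvar_lin]
  rw [h1, expec_exp_sum (fun e : Edge K => η / K * cfp i e.1),
    prod_eval (fun e : Edge K => cfp i e.1) (cf_vals i) (η / K), count_one]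

lemma expec_two {K : ℕ} (η : ℝ) {i j : Fin K} (hij : i ≠ j) :
    expec (fun ω : SignSpace K => Real.exp (η * Xvar ω i) * Real.exp (η * Xvar ω j))
      = ((Real.exp (η / K) + Real.exp (-(η / K))) / 2) ^ (2 * K - 4) := by
  classical
  have h1 : expec (fun ω : SignSpace K =>
        Real.exp (η * Xvar ω i) * Real.exp (η * Xvar ω j))
      = expec (fun ω : SignSpace K =>
          Real.exp (∑ e : Edge K, (η / K * (cfp i e.1 + cfp j e.1)) * signVal (ω e))) := by
    congr 1
    funext ω
    rw [← Real.exp_add, Xvar_lin η ω i, Xvar_lin η ω j, ← Finset.sum_add_distrib]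
    refine congrArg Real.exp (Fintype.sum_congr _ _ (fun e => by ring))
  rw [h1, expec_exp_sum (fun e : Edge K => η / K * (cfp i e.1 + cfp j e.1)),
    prod_eval (fun e : Edge K => cfp i e.1 + cfp j e.1) (cf2_vals hij) (η / K),
    count_two hij]

lemma one_le_coshK (x : ℝ) : 1 ≤ (Real.exp x + Real.exp (-x)) / 2 := by
  have h1 := Real.add_one_le_exp x
  have h2 := Real.add_one_le_exp (-x)
  linarith

lemma coshK_le {x : ℝ} (h0 : 0 ≤ x) (h1 : |x| ≤ 1) :
    (Real.exp x + Real.exp (-x)) / 2 ≤ Real.exp (3 / 4 * x ^ 2) := by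
  have hb1 := Real.exp_bound h1 (n := 2) (by norm_num)
  have hb2 := Real.exp_bound (x := -x) (by simpa using h1) (n := 2) (by norm_num)
  have e1 : Real.exp x ≤ 1 + x + 3 / 4 * x ^ 2 := by
    rw [abs_le] at hb1
    have := hb1.2
    simp [Finset.sum_range_succ] at this
    nlinarith [this]
  have e2 : Real.exp (-x) ≤ 1 - x + 3 / 4 * x ^ 2 := by
    rw [abs_le] at hb2
    have := hb2.2
    simp [Finset.sum_range_succ] at this
    nlinarith [this]
  have e3 : 3 / 4 * x ^ 2 + 1 ≤ Real.exp (3 / 4 * x ^ 2) := Real.add_one_le_exp _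
  linarith

lemma tendsto_pow_coshK (η : ℝ) (hη : 0 < η) (m : ℕ → ℕ) (hm : ∀ K, m K ≤ 2 * K) :
    Filter.Tendsto
      (fun K : ℕ => ((Real.exp (η / K) + Real.exp (-(η / K))) / 2) ^ m K)
      Filter.atTop (nhds 1) := by
  set c : ℕ → ℝ := fun K => (Real.exp (η / K) + Real.exp (-(η / K))) / 2 with hc
  have hupper : Filter.Tendsto (fun K : ℕ => Real.exp (2 * η ^ 2 / K))
      Filter.atTop (nhds 1) := by
    have h0 : Filter.Tendsto (fun K : ℕ => 2 * η ^ 2 / (K : ℝ)) Filter.atTop (nhds 0) :=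
      tendsto_const_div_atTop_nhds_zero_nat _
    have := (Real.continuous_exp.tendsto 0).comp h0
    simpa [Function.comp_def] using this
  refine tendsto_of_tendsto_of_tendsto_of_le_of_le' tendsto_const_nhds hupper ?_ ?_
  · filter_upwards with K
    exact one_le_pow₀ (one_le_coshK (η / K))
  · filter_upwards [Filter.eventually_ge_atTop (⌈η⌉₊ + 1)] with K hK
    have hK1 : (1 : ℝ) ≤ K := by
      have : (1 : ℕ) ≤ K := le_trans (by omega) hK
      exact_mod_cast this
    have hKpos : (0 : ℝ) < K := by linarith
    have hηK : η ≤ K := by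
      calc η ≤ ⌈η⌉₊ := Nat.le_ceil η
      _ ≤ K := by exact_mod_cast le_trans (by omega) hK
    have hx0 : 0 ≤ η / K := by positivity
    have hx1 : |η / K| ≤ 1 := by
      rw [abs_of_nonneg hx0]
      rw [div_le_one hKpos]
      exact hηK
    have step1 : c K ^ m K ≤ Real.exp (3 / 4 * (η / K) ^ 2) ^ m K :=
      pow_le_pow_left₀ (by positivity) (coshK_le hx0 hx1) _
    have step2 : Real.exp (3 / 4 * (η / K) ^ 2) ^ m K
        = Real.exp ((m K : ℝ) * (3 / 4 * (η / K) ^ 2)) := by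
      rw [← Real.exp_nat_mul]
    have step3 : (m K : ℝ) * (3 / 4 * (η / K) ^ 2) ≤ 2 * η ^ 2 / K := by
      have hmK : (m K : ℝ) ≤ 2 * K := by exact_mod_cast hm K
      have hrw : (m K : ℝ) * (3 / 4 * (η / K) ^ 2) = (m K * (3 / 4) * η ^ 2) / (K : ℝ) ^ 2 := by
        rw [div_pow]; ring
      rw [hrw, div_le_div_iff₀ (by positivity) hKpos]
      have key : (m K : ℝ) * (η ^ 2 * K) ≤ 2 * K * (η ^ 2 * K) :=
        mul_le_mul_of_nonneg_right hmK (by positivity)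
      nlinarith [key, mul_nonneg (mul_nonneg (Nat.cast_nonneg (m K)) (sq_nonneg η)) hKpos.le]
    calc c K ^ m K ≤ Real.exp ((m K : ℝ) * (3 / 4 * (η / K) ^ 2)) := by
          rw [← step2]; exact step1
      _ ≤ Real.exp (2 * η ^ 2 / K) := Real.exp_le_exp.mpr step3


/-- Covariance formula for `e^{η X_i}`, `e^{η X_j}` (`i ≠ j`) and its vanishing as `K → ∞`. -/
theorem covariance_of_exp_rademacher (η : ℝ) (hη : 0 < η) :
    (∀ (K : ℕ), 2 ≤ K → ∀ i j : Fin K, i ≠ j →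
      expec (fun ω => Real.exp (η * Xvar ω i) * Real.exp (η * Xvar ω j))
        - expec (fun ω => Real.exp (η * Xvar ω i)) * expec (fun ω => Real.exp (η * Xvar ω j))
      = ((Real.exp (η / K) + Real.exp (-(η / K))) / 2) ^ (2 * K - 4)
        - ((Real.exp (η / K) + Real.exp (-(η / K))) / 2) ^ (2 * K - 2))
    ∧ Filter.Tendsto
        (fun K : ℕ =>
          ((Real.exp (η / K) + Real.exp (-(η / K))) / 2) ^ (2 * K - 4)
            - ((Real.exp (η / K) + Real.exp (-(η / K))) / 2) ^ (2 * K - 2))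
        Filter.atTop (nhds 0) := by
  constructor
  · intro K hK i j hij
    rw [expec_two η hij, expec_one, expec_one, ← pow_add,
      show K - 1 + (K - 1) = 2 * K - 2 by omega]
  · have h1 := tendsto_pow_coshK η hη (fun K => 2 * K - 4) (fun K => Nat.sub_le _ _)
    have h2 := tendsto_pow_coshK η hη (fun K => 2 * K - 2) (fun K => Nat.sub_le _ _)
    simpa using h1.sub h2
end

section
/- Let J(θ) = E_{y∼π_θ}[r(y) - η^{-1}·log(π_θ(y)/π_ref(y))] over a finite set Y. Then for any constant b, ∇J(θ) = E_{y∼π_θ}[(r(y) - η^{-1}·log(π_θ(y)/π_ref(y)) - b)·∇_θ log π_θ(y)], and this equals η·E_{y∼π_θ}[ -∇_θ ( (r(y) - η^{-1} log(π_θ(y)/π_ref(y)) - b)² / 2 ) ], where ∇_θ acts only on the explicit π_θ inside the square (the sampling distribution is held fixed). -/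
theorem sppo_square_loss_policy_gradient
    {E : Type*} [NormedAddCommGroup E] [NormedSpace ℝ E]
    {Y : Type*} [Fintype Y] [Nonempty Y]
    (π : E → Y → ℝ) (hpos : ∀ θ y, 0 < π θ y) (hsum : ∀ θ, ∑ y, π θ y = 1)
    (hdiff : ∀ y, Differentiable ℝ (fun θ => π θ y))
    (πref : Y → ℝ) (hπref : ∀ y, 0 < πref y)
    (r : Y → ℝ) (η : ℝ) (hη : 0 < η) (b : ℝ) :
    ∀ θ₀ : E,
      fderiv ℝ (fun θ => ∑ y, π θ y * (r y - η⁻¹ * Real.log (π θ y / πref y))) θ₀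
        = ∑ y, (π θ₀ y * (r y - η⁻¹ * Real.log (π θ₀ y / πref y) - b)) •
            fderiv ℝ (fun θ => Real.log (π θ y)) θ₀
      ∧
      fderiv ℝ (fun θ => ∑ y, π θ y * (r y - η⁻¹ * Real.log (π θ y / πref y))) θ₀
        = η • ∑ y, π θ₀ y •
            (-(fderiv ℝ (fun θ =>
                (r y - η⁻¹ * Real.log (π θ y / πref y) - b) ^ 2 / 2) θ₀)) := by
  intro θ₀
  set D : Y → (E →L[ℝ] ℝ) := fun y => fderiv ℝ (fun θ => π θ y) θ₀ with hDdef
  have hd : ∀ y, HasFDerivAt (fun θ => π θ y) (D y) θ₀ :=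
    fun y => (hdiff y θ₀).hasFDerivAt
  have hne : ∀ θ y, π θ y ≠ 0 := fun θ y => (hpos θ y).ne'
  have hlog : ∀ y, HasFDerivAt (fun θ => Real.log (π θ y)) ((π θ₀ y)⁻¹ • D y) θ₀ :=
    fun y => (hd y).log (hne θ₀ y)
  have hlogdiv : ∀ y, HasFDerivAt (fun θ => Real.log (π θ y / πref y))
      ((π θ₀ y)⁻¹ • D y) θ₀ := by
    intro y
    have heq : (fun θ => Real.log (π θ y / πref y))
        = fun θ => Real.log (π θ y) - Real.log (πref y) := by
      funext θ; rw [Real.log_div (hne θ y) (hπref y).ne']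
    rw [heq]
    simpa using (hlog y).sub_const (Real.log (πref y))
  set g : Y → ℝ := fun y => r y - η⁻¹ * Real.log (π θ₀ y / πref y) with hgdef
  have hg : ∀ y, HasFDerivAt (fun θ => r y - η⁻¹ * Real.log (π θ y / πref y))
      ((-(η⁻¹ * (π θ₀ y)⁻¹)) • D y) θ₀ := by
    intro y
    have := ((hlogdiv y).const_mul η⁻¹).const_sub (r y)
    refine this.congr_fderiv (Eq.symm ?_)
    rw [smul_smul]
    exact neg_smul _ _
  have hterm : ∀ y, HasFDerivAt
      (fun θ => π θ y * (r y - η⁻¹ * Real.log (π θ y / πref y)))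
      ((g y - η⁻¹) • D y) θ₀ := by
    intro y
    have h := (hd y).mul (hg y)
    refine h.congr_fderiv (Eq.symm ?_)
    rw [smul_smul, sub_smul (g y) η⁻¹ (D y)]
    have hc : π θ₀ y * -(η⁻¹ * (π θ₀ y)⁻¹) = -η⁻¹ := by
      rw [mul_neg, mul_comm η⁻¹, ← mul_assoc, mul_inv_cancel₀ (hne θ₀ y), one_mul]
    rw [hc, neg_smul, sub_eq_add_neg, add_comm]
  have hsumD : ∑ y, D y = 0 := by
    have h1 : HasFDerivAt (fun θ => ∑ y, π θ y) (∑ y, D y) θ₀ :=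
      HasFDerivAt.fun_sum (fun y _ => hd y)
    have heq : (fun θ => ∑ y, π θ y) = fun _ : E => (1 : ℝ) := funext hsum
    rw [heq] at h1
    exact h1.unique (hasFDerivAt_const 1 θ₀)
  have key : ∀ c : ℝ, ∑ y, (g y - c) • D y = ∑ y, g y • D y := by
    intro c
    have hs : ∀ y, (g y - c) • D y = g y • D y - c • D y := fun y => sub_smul (g y) c (D y)
    simp only [hs, Finset.sum_sub_distrib, ← Finset.smul_sum, hsumD, smul_zero,
      sub_zero]
  have hJ : fderiv ℝ (fun θ => ∑ y, π θ y * (r y - η⁻¹ * Real.log (π θ y / πref y))) θ₀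
      = ∑ y, (g y - η⁻¹) • D y :=
    (HasFDerivAt.fun_sum (fun y _ => hterm y)).fderiv
  constructor
  · rw [hJ, key η⁻¹, ← key b]
    refine Finset.sum_congr rfl fun y _ => ?_
    rw [(hlog y).fderiv, smul_smul]
    congr 1
    simp only [hgdef]
    field_simp [hne θ₀ y, hη.ne']
  · rw [hJ, key η⁻¹, ← key b]
    rw [Finset.smul_sum]
    refine Finset.sum_congr rfl fun y _ => ?_
    set c : ℝ := g y - b with hcdef
    have hb : HasFDerivAt (fun θ => r y - η⁻¹ * Real.log (π θ y / πref y) - b)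
        ((-(η⁻¹ * (π θ₀ y)⁻¹)) • D y) θ₀ := (hg y).sub_const b
    have hm := hb.mul hb
    have heq : (fun θ => (r y - η⁻¹ * Real.log (π θ y / πref y) - b) ^ 2 / 2)
        = fun θ => 2⁻¹ * ((r y - η⁻¹ * Real.log (π θ y / πref y) - b) *
            (r y - η⁻¹ * Real.log (π θ y / πref y) - b)) := by
      funext θ; ring
    have hsq : HasFDerivAt
        (fun θ => (r y - η⁻¹ * Real.log (π θ y / πref y) - b) ^ 2 / 2)
        ((2 : ℝ)⁻¹ • (c • ((-(η⁻¹ * (π θ₀ y)⁻¹)) • D y)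
          + c • ((-(η⁻¹ * (π θ₀ y)⁻¹)) • D y))) θ₀ := by
      rw [heq]
      exact hm.const_mul (2 : ℝ)⁻¹
    rw [hsq.fderiv]
    simp only [smul_smul, smul_add, ← add_smul, ← neg_smul]
    congr 1
    simp only [hcdef, hgdef]
    field_simp [hne θ₀ y, hη.ne']
    ring
end

section
/- In the same soft-MDP setting, the policy π*(a_h | s_h) := exp(η(Q*(s_h, a_h) - V*(s_h))) is a valid probability distribution at each state, and satisfies η^{-1} log π*(a_h|s_h) = η^{-1} log π_ref(a_h|s_h) + V*(s_{h+1}) - V*(s_h). Consequently, for any full trajectory y = (a_1,...,a_H), ∑_{h=1}^H log(π*(a_h|s_h)/π_ref(a_h|s_h)) = η·r(y; s_1) - η·V*(s_1), i.e. the trajectory log-ratio telescopes to η times the reward minus the initial soft value. -/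
/-- Soft value function of the deterministic token-level MDP, indexed by the
number of remaining steps: `V 0 s = r s` (terminal reward) and
`V (n+1) s = η⁻¹ log ∑_a exp(η (η⁻¹ log π_ref(a|s) + V n (s ++ [a])))`. -/
noncomputable def softV {A : Type*} [Fintype A]
    (πref : List A → A → ℝ) (r : List A → ℝ) (η : ℝ) : ℕ → List A → ℝ
  | 0, s => r s
  | n + 1, s => η⁻¹ * Real.log (∑ a : A,
      Real.exp (η * (η⁻¹ * Real.log (πref s a) + softV πref r η n (s ++ [a]))))

/-- Soft Q-function: `Q n s a = η⁻¹ log π_ref(a|s) + V n (s ++ [a])`, where `n`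
is the number of steps remaining after taking `a`. -/
noncomputable def softQ {A : Type*} [Fintype A]
    (πref : List A → A → ℝ) (r : List A → ℝ) (η : ℝ) (n : ℕ) (s : List A) (a : A) : ℝ :=
  η⁻¹ * Real.log (πref s a) + softV πref r η n (s ++ [a])

/-- The token-level soft-optimal policy `π*(a|s) = exp(η (Q n s a - V (n+1) s))`. -/
noncomputable def piStar {A : Type*} [Fintype A]
    (πref : List A → A → ℝ) (r : List A → ℝ) (η : ℝ) (n : ℕ) (s : List A) (a : A) : ℝ :=
  Real.exp (η * (softQ πref r η n s a - softV πref r η (n + 1) s))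

theorem soft_optimal_policy_telescoping
    {A : Type*} [Fintype A] [Nonempty A]
    (πref : List A → A → ℝ) (hpos : ∀ s a, 0 < πref s a)
    (hnorm : ∀ s, ∑ a : A, πref s a = 1)
    (r : List A → ℝ) (η : ℝ) (hη : 0 < η) :
    (∀ (n : ℕ) (s : List A), ∑ a : A, piStar πref r η n s a = 1)
    ∧ (∀ (n : ℕ) (s : List A) (a : A),
        η⁻¹ * Real.log (piStar πref r η n s a)
          = η⁻¹ * Real.log (πref s a)
            + softV πref r η n (s ++ [a]) - softV πref r η (n + 1) s)
    ∧ (∀ (H : ℕ) (s₁ : List A) (y : Fin H → A),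
        ∑ h : Fin H,
          Real.log (piStar πref r η (H - 1 - h) (s₁ ++ (List.ofFn y).take h) (y h)
            / πref (s₁ ++ (List.ofFn y).take h) (y h))
          = η * r (s₁ ++ List.ofFn y) - η * softV πref r η H s₁) := by
  have hη' : η ≠ 0 := hη.ne'
  have hsum : ∀ (n : ℕ) (s : List A),
      (0:ℝ) < ∑ a : A, Real.exp (η * softQ πref r η n s a) :=
    fun n s => Finset.sum_pos (fun a _ => Real.exp_pos _) Finset.univ_nonempty
  have hV : ∀ (n : ℕ) (s : List A),
      Real.exp (η * softV πref r η (n + 1) s)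
        = ∑ a : A, Real.exp (η * softQ πref r η n s a) := by
    intro n s
    have h1 : softV πref r η (n + 1) s
        = η⁻¹ * Real.log (∑ a : A, Real.exp (η * softQ πref r η n s a)) := by
      simp [softV, softQ]
    rw [h1, mul_inv_cancel_left₀ hη', Real.exp_log (hsum n s)]
  -- Part 1
  have part1 : ∀ (n : ℕ) (s : List A), ∑ a : A, piStar πref r η n s a = 1 := by
    intro n s
    have h : ∀ a : A, piStar πref r η n s a
        = Real.exp (η * softQ πref r η n s a)
          * Real.exp (-(η * softV πref r η (n + 1) s)) := by
      intro a
      rw [piStar, ← Real.exp_add]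
      ring_nf
    simp_rw [h]
    rw [← Finset.sum_mul, ← hV n s, ← Real.exp_add, add_neg_cancel, Real.exp_zero]
  -- Part 2
  have part2 : ∀ (n : ℕ) (s : List A) (a : A),
      η⁻¹ * Real.log (piStar πref r η n s a)
        = η⁻¹ * Real.log (πref s a)
          + softV πref r η n (s ++ [a]) - softV πref r η (n + 1) s := by
    intro n s a
    rw [piStar, Real.log_exp, inv_mul_cancel_left₀ hη', softQ]
  -- Part 3
  refine ⟨part1, part2, ?_⟩
  intro H s₁ y
  set f : ℕ → ℝ := fun i => η * softV πref r η (H - i) (s₁ ++ (List.ofFn y).take i) with hf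
  have key : ∀ h : Fin H,
      Real.log (piStar πref r η (H - 1 - h) (s₁ ++ (List.ofFn y).take h) (y h)
        / πref (s₁ ++ (List.ofFn y).take h) (y h))
      = f (h + 1) - f h := by
    intro h
    have hlt : (h : ℕ) < H := h.isLt
    set s := s₁ ++ (List.ofFn y).take h with hs
    have hstep : s ++ [y h] = s₁ ++ (List.ofFn y).take (h + 1) := by
      rw [hs, List.append_assoc]
      congr 1
      rw [List.take_succ]
      congr 1
      simp [List.getElem?_ofFn, hlt]
    have hlog : Real.log (piStar πref r η (H - 1 - h) s (y h))
        = Real.log (πref s (y h))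
          + η * softV πref r η (H - 1 - h) (s ++ [y h])
          - η * softV πref r η (H - 1 - h + 1) s := by
      have := part2 (H - 1 - h) s (y h)
      have h2 := congrArg (fun x => η * x) this
      rw [mul_inv_cancel_left₀ hη'] at h2
      rw [h2, mul_sub, mul_add, mul_inv_cancel_left₀ hη']
    have hp : piStar πref r η (H - 1 - h) s (y h) ≠ 0 := by
      rw [piStar]; exact (Real.exp_pos _).ne'
    rw [Real.log_div hp (hpos s (y h)).ne', hlog]
    have e1 : H - 1 - (h : ℕ) = H - ((h : ℕ) + 1) := by omega
    have e2 : H - 1 - (h : ℕ) + 1 = H - (h : ℕ) := by omega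
    rw [hstep, e2, e1]
    simp only [hf]
    rw [← hs]
    ring
  rw [Finset.sum_congr rfl (fun h _ => key h),
    Fin.sum_univ_eq_sum_range (fun i => f (i + 1) - f i), Finset.sum_range_sub f]
  have fH : f H = η * r (s₁ ++ List.ofFn y) := by
    have ht : (List.ofFn y).take H = List.ofFn y :=
      List.take_of_length_le (by simp)
    simp [hf, ht, softV]
  have f0 : f 0 = η * softV πref r η H s₁ := by simp [hf]
  rw [fH, f0]
end
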